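/- With the hypotheses of the canonical augmentation setup: if Z and W are isomorphic, both generated by canonical augmentation (i.e., (Z,p(Z)) ≅ (Z,m(Z)) and (W,p(W)) ≅ (W,m(W))), and additionally p(Z) = p(W) = X, then there exists a ∈ Aut(X) with a·Z = W. -/

import Mathlib

/-!
Isomorphism of pairs is the orbit relation of the diagonal action of `G` on `Ω × Ω`, hence
transitive. Chaining `(Z, X) ≅ (Z, m Z) ≅ (W, m W) ≅ (W, X)`, where the middle step is the
canonicity of `m` applied to `Z ≅ W`, yields one `a : G` with `a • Z = W` and `a • X = X`.
-/

open MulAction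

theorem MulAction.mem_orbit_prod_iff {G α β : Type*} [Group G] [MulAction G α] [MulAction G β]
    {a c : α} {b d : β} :
    (c, d) ∈ orbit G (a, b) ↔ ∃ g : G, g • a = c ∧ g • b = d := by
  simp only [mem_orbit_iff, Prod.smul_mk, Prod.mk.injEq]

/-- If Z ≅ W are both generated by canonical augmentation and share the same
parent X, then some automorphism of X maps Z to W. -/
theorem canonical_augmentation_siblings_related_by_aut {G Ω : Type*} [Group G]
    [MulAction G Ω] (nr : Set Ω) (p m : nr → Ω)
    (hm : ∀ X Y : nr,
      (∃ g : G, g • (X : Ω) = (Y : Ω) ∧ g • m X = m Y) ↔ (∃ g : G, g • (X : Ω) = (Y : Ω)))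
    (Z W : nr) (X : Ω)
    (hZW : ∃ g : G, g • (Z : Ω) = (W : Ω))
    (hZ : ∃ g : G, g • (Z : Ω) = (Z : Ω) ∧ g • p Z = m Z)
    (hW : ∃ g : G, g • (W : Ω) = (W : Ω) ∧ g • p W = m W)
    (hpZ : p Z = X) (hpW : p W = X) :
    ∃ a : G, a • X = X ∧ a • (Z : Ω) = (W : Ω) := by
  subst hpZ
  have hZ_pair : ((Z : Ω), m Z) ∈ orbit G ((Z : Ω), p Z) := mem_orbit_prod_iff.mpr hZ
  have hZW_pair : ((W : Ω), m W) ∈ orbit G ((Z : Ω), m Z) :=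
    mem_orbit_prod_iff.mpr ((hm Z W).mpr hZW)
  have hW_pair : ((W : Ω), p Z) ∈ orbit G ((W : Ω), m W) := by
    rw [mem_orbit_symm, ← hpW]
    exact mem_orbit_prod_iff.mpr hW
  have hZX : ((W : Ω), p Z) ∈ orbit G ((Z : Ω), p Z) := by
    rwa [← orbit_eq_iff.mpr hZ_pair, ← orbit_eq_iff.mpr hZW_pair]
  obtain ⟨a, haZ, haX⟩ := mem_orbit_prod_iff.mp hZX
  exact ⟨a, haX, haZ⟩
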